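/- Let E be a normed space, f : E → E, u, w ∈ E, p, q ≥ 1, m ∈ ℕ, and let a < b₁ < a₁ < b₂ < a₂ < ... < b_m < a_m < b. Define x : [a,b] → E by x(t) = u if t = a_k for some k and x(t) = w otherwise. Then var_q(f∘x, [a,b]) ≥ m·‖f(u)-f(w)‖^q. -/

import Mathlib

open scoped ENNReal NNReal

noncomputable def pVar {E : Type*} [NormedAddCommGroup E] (p a b : ℝ) (x : ℝ → E) : ℝ≥0∞ :=
  ⨆ (n : ℕ) (t : Fin (n + 1) → ℝ) (_ : StrictMono t) (_ : t 0 = a)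
    (_ : t (Fin.last n) = b),
    ∑ i : Fin n, (‖x (t i.succ) - x (t i.castSucc)‖₊ : ℝ≥0∞) ^ p

/-! On the partition `a < b₁ < a₁ < ⋯ < b_m < a_m < b` every increment `bₖ → aₖ` of `f ∘ x`
is `f u - f w`, so these `m` increments alone already contribute `m ‖f u - f w‖^q`. -/

theorem sum_le_pVar {E : Type*} [NormedAddCommGroup E] (p : ℝ) {a b : ℝ} (x : ℝ → E) {n : ℕ}
    {t : Fin (n + 1) → ℝ} (ht : StrictMono t) (ha : t 0 = a) (hb : t (Fin.last n) = b) :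
    ∑ i : Fin n, (‖x (t i.succ) - x (t i.castSucc)‖₊ : ℝ≥0∞) ^ p ≤ pVar p a b x :=
  le_iSup_of_le n <| le_iSup_of_le t <| le_iSup_of_le ht <| le_iSup_of_le ha <|
    le_iSup_of_le hb le_rfl

theorem sum_comp_le_pVar {E : Type*} [NormedAddCommGroup E] (p : ℝ) {a b : ℝ} (x : ℝ → E)
    {n m : ℕ} {t : Fin (n + 1) → ℝ} (ht : StrictMono t) (ha : t 0 = a)
    (hb : t (Fin.last n) = b) {φ : Fin m → Fin n} (hφ : Function.Injective φ) :
    ∑ k : Fin m, (‖x (t (φ k).succ) - x (t (φ k).castSucc)‖₊ : ℝ≥0∞) ^ p ≤ pVar p a b x :=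
  calc _ = ∑ i ∈ Finset.univ.map ⟨φ, hφ⟩, (‖x (t i.succ) - x (t i.castSucc)‖₊ : ℝ≥0∞) ^ p :=
        (Finset.sum_map _ _ _).symm
    _ ≤ ∑ i : Fin n, (‖x (t i.succ) - x (t i.castSucc)‖₊ : ℝ≥0∞) ^ p :=
        Finset.sum_le_sum_of_subset (Finset.subset_univ _)
    _ ≤ pVar p a b x := sum_le_pVar p x ht ha hb

section AlternatingPoints

variable {a b : ℝ} {m : ℕ} {aa bb : Fin m → ℝ}

/-- The points `a, bb 0, aa 0, bb 1, aa 1, …, bb (m-1), aa (m-1), b` at the indices `0, …, 2m+1`. -/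
def alternatingPoints (a b : ℝ) (aa bb : Fin m → ℝ) (i : ℕ) : ℝ :=
  if i = 0 then a
  else if h : (i - 1) / 2 < m then
    if i % 2 = 1 then bb ⟨(i - 1) / 2, h⟩ else aa ⟨(i - 1) / 2, h⟩
  else b

theorem alternatingPoints_zero : alternatingPoints a b aa bb 0 = a := rfl

theorem alternatingPoints_odd (k : ℕ) :
    alternatingPoints a b aa bb (2 * k + 1) = if h : k < m then bb ⟨k, h⟩ else b := by
  simp [alternatingPoints, Nat.add_mod]

theorem alternatingPoints_even (k : Fin m) :
    alternatingPoints a b aa bb (2 * k + 2) = aa k := by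
  have hdiv : (2 * (k : ℕ) + 1) / 2 = k := by omega
  simp [alternatingPoints, hdiv]

theorem alternatingPoints_last : alternatingPoints a b aa bb (2 * m + 1) = b := by
  simp [alternatingPoints_odd]

variable (h1 : ∀ k, a < bb k ∧ bb k < aa k ∧ aa k < b) (h2 : ∀ i j : Fin m, i < j → aa i < bb j)
include h1 h2

theorem bb_lt_aa_of_le {k j : Fin m} (hkj : k ≤ j) : bb k < aa j := by
  rcases hkj.eq_or_lt with rfl | hlt
  · exact (h1 k).2.1
  · exact ((h1 k).2.1.trans (h2 k j hlt)).trans (h1 j).2.1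

theorem bb_ne_aa (k j : Fin m) : bb k ≠ aa j := by
  rcases le_or_gt k j with hkj | hjk
  · exact (bb_lt_aa_of_le h1 h2 hkj).ne
  · exact (h2 j k hjk).ne'

theorem alternatingPoints_lt_succ (hab : a < b) {i : ℕ} (hi : i < 2 * m + 1) :
    alternatingPoints a b aa bb i < alternatingPoints a b aa bb (i + 1) := by
  obtain ⟨k, rfl | rfl⟩ := Nat.even_or_odd' i
  · rw [alternatingPoints_odd]
    rcases k with _ | j
    · split_ifs with h
      exacts [(h1 _).1, hab]
    · have hj : j < m := by omega
      rw [show 2 * (j + 1) = 2 * (⟨j, hj⟩ : Fin m) + 2 by simp; ring, alternatingPoints_even]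
      split_ifs with h
      exacts [h2 _ _ (Fin.mk_lt_mk.2 j.lt_succ_self), (h1 _).2.2]
  · have hk : k < m := by omega
    rw [alternatingPoints_odd, dif_pos hk,
      show 2 * k + 1 + 1 = 2 * (⟨k, hk⟩ : Fin m) + 2 by rfl, alternatingPoints_even]
    exact (h1 _).2.1

theorem alternatingPoints_strictMono (hab : a < b) :
    StrictMono fun i : Fin (2 * m + 2) => alternatingPoints a b aa bb i :=
  Fin.strictMono_iff_lt_succ.2 fun i => alternatingPoints_lt_succ h1 h2 hab i.isLt

end AlternatingPoints

theorem pVar_comp_two_valued_ge_general {E : Type*} [NormedAddCommGroup E]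
    (q a b : ℝ) (f : E → E) (u w : E) (m : ℕ)
    (aa bb : Fin m → ℝ)
    (h1 : ∀ k, a < bb k ∧ bb k < aa k ∧ aa k < b)
    (h2 : ∀ i j : Fin m, i < j → aa i < bb j)
    (x : ℝ → E) (hxdef : ∀ t : ℝ, x t = if ∃ k, t = aa k then u else w) :
    (m : ℝ≥0∞) * (‖f u - f w‖₊ : ℝ≥0∞) ^ q ≤ pVar q a b (fun t => f (x t)) := by
  obtain rfl | hm := Nat.eq_zero_or_pos m
  · simp
  obtain ⟨ha, hba, hb⟩ := h1 ⟨0, hm⟩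
  have hab : a < b := ha.trans (hba.trans hb)
  have hxu (k : Fin m) : x (aa k) = u := by rw [hxdef, if_pos ⟨k, rfl⟩]
  have hxw (k : Fin m) : x (bb k) = w := by
    rw [hxdef, if_neg]
    rintro ⟨j, hj⟩
    exact bb_ne_aa h1 h2 k j hj
  let φ : Fin m → Fin (2 * m + 1) := fun k => ⟨2 * k + 1, by omega⟩
  have hφ : Function.Injective φ := fun k j h => Fin.ext (by simpa [φ] using h)
  refine le_trans (le_of_eq ?_) (sum_comp_le_pVar q (fun t => f (x t))
    (alternatingPoints_strictMono h1 h2 hab) alternatingPoints_zero alternatingPoints_last hφ)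
  simp [φ, alternatingPoints_even, alternatingPoints_odd, hxu, hxw]

/-- Let `a < b₁ < a₁ < b₂ < a₂ < … < b_m < a_m < b` and let `x` equal `u` at the points
`aₖ` and `w` elsewhere. Then `var_q(f ∘ x, [a,b]) ≥ m ‖f u - f w‖^q`. -/
theorem pVar_comp_two_valued_ge {E : Type*} [NormedAddCommGroup E]
    (p q a b : ℝ) (hp : 1 ≤ p) (hq : 1 ≤ q) (f : E → E) (u w : E) (m : ℕ)
    (aa bb : Fin m → ℝ)
    (h1 : ∀ k, a < bb k ∧ bb k < aa k ∧ aa k < b)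
    (h2 : ∀ i j : Fin m, i < j → aa i < bb j)
    (x : ℝ → E) (hxdef : ∀ t : ℝ, x t = if ∃ k, t = aa k then u else w) :
    (m : ℝ≥0∞) * (‖f u - f w‖₊ : ℝ≥0∞) ^ q ≤ pVar q a b (fun t => f (x t)) :=
  pVar_comp_two_valued_ge_general q a b f u w m aa bb h1 h2 x hxdef
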